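/- arXiv:math/0401321 — 5 statements merged into one kernel-verified Lean document; each statement's English description precedes it below -/
import Mathlib

section
/- Let F : ℂ^n → ℝ^n be given by F₁(z) = Im(z₁z₂⋯zₙ) and Fₖ(z) = |z₁|² − |zₖ|² for k = 2,…,n. Then for all i, j the Poisson bracket {Fᵢ, Fⱼ} with respect to the standard symplectic form ω₀ = Σ dxᵢ ∧ dyᵢ on ℂ^n ≅ ℝ^{2n} vanishes identically. -/
/-!
The Hamiltonian flow of `|z_a|²` rotates the coordinate `z_a` alone, hence rotates
`z₁⋯zₙ` at the same speed whatever `a` is: `{Im(z₁⋯zₙ), |z_a|²} = -2 Re(z₁⋯zₙ)` for every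
`a`, so `F₁` commutes with each difference `|z₁|² - |z_k|²`. The functions `|z_a|²` depend
on single coordinates and commute with one another, and bilinearity of the bracket does
the rest.
-/

/-- The Poisson bracket of two smooth real functions on ℂⁿ with respect to the
standard symplectic form `ω₀ = ∑ dxₖ ∧ dyₖ` (where `zₖ = xₖ + i yₖ`), expressed in
coordinates: `{f,g} = ∑ₖ (∂f/∂xₖ · ∂g/∂yₖ − ∂f/∂yₖ · ∂g/∂xₖ)`. -/
noncomputable def poissonBracket (n : ℕ) (f g : (Fin n → ℂ) → ℝ) (z : Fin n → ℂ) : ℝ :=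
  ∑ k : Fin n,
    (fderiv ℝ f z (Pi.single k 1) * fderiv ℝ g z (Pi.single k Complex.I)
      - fderiv ℝ f z (Pi.single k Complex.I) * fderiv ℝ g z (Pi.single k 1))

open Finset

section

variable {n : ℕ}

theorem poissonBracket_swap (f g : (Fin n → ℂ) → ℝ) (z : Fin n → ℂ) :
    poissonBracket n g f z = -poissonBracket n f g z := by
  simp only [poissonBracket, ← sum_neg_distrib]
  exact sum_congr rfl fun _ _ => by ring

theorem poissonBracket_self (f : (Fin n → ℂ) → ℝ) (z : Fin n → ℂ) :
    poissonBracket n f f z = 0 := by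
  linarith [poissonBracket_swap f f z]

theorem poissonBracket_sub_right {f g h : (Fin n → ℂ) → ℝ} {z : Fin n → ℂ}
    (hg : DifferentiableAt ℝ g z) (hh : DifferentiableAt ℝ h z) :
    poissonBracket n f (fun w => g w - h w) z
      = poissonBracket n f g z - poissonBracket n f h z := by
  have hd : fderiv ℝ (fun w => g w - h w) z = fderiv ℝ g z - fderiv ℝ h z := fderiv_sub hg hh
  simp only [poissonBracket, hd, sub_apply, ← sum_sub_distrib]
  exact sum_congr rfl fun _ _ => by ring

theorem poissonBracket_sub_left {f g h : (Fin n → ℂ) → ℝ} {z : Fin n → ℂ}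
    (hf : DifferentiableAt ℝ f z) (hg : DifferentiableAt ℝ g z) :
    poissonBracket n (fun w => f w - g w) h z
      = poissonBracket n f h z - poissonBracket n g h z := by
  rw [poissonBracket_swap, poissonBracket_sub_right hf hg, poissonBracket_swap f,
    poissonBracket_swap g]
  ring

theorem hasFDerivAt_normSq_apply (a : Fin n) (z : Fin n → ℂ) :
    HasFDerivAt (fun w : Fin n → ℂ => Complex.normSq (w a))
      (2 • (innerSL ℝ (z a)).comp (ContinuousLinearMap.proj a)) z := by
  simp only [Complex.normSq_eq_norm_sq]
  exact (hasFDerivAt_apply a z).norm_sq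

theorem fderiv_normSq_apply (a : Fin n) (z w : Fin n → ℂ) :
    fderiv ℝ (fun w : Fin n → ℂ => Complex.normSq (w a)) z w
      = 2 * ((z a).re * (w a).re + (z a).im * (w a).im) := by
  rw [(hasFDerivAt_normSq_apply a z).fderiv]
  simp [Complex.inner]
  ring

theorem fderiv_im_prod_single (k : Fin n) (z : Fin n → ℂ) (v : ℂ) :
    fderiv ℝ (fun w : Fin n → ℂ => (∏ i, w i).im) z (Pi.single k v)
      = (v * ∏ j ∈ univ.erase k, z j).im := by
  classical
  have h : HasFDerivAt (fun w : Fin n → ℂ => (∏ i, w i).im) _ z :=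
    Complex.imCLM.hasFDerivAt.comp z (hasFDerivAt_finsetProd (u := univ) (x := z))
  rw [h.fderiv]
  simp [Pi.single_apply, mul_comm]

theorem poissonBracket_normSq_apply (a b : Fin n) (z : Fin n → ℂ) :
    poissonBracket n (fun w => Complex.normSq (w a)) (fun w => Complex.normSq (w b)) z = 0 := by
  refine sum_eq_zero fun k _ => ?_
  simp only [fderiv_normSq_apply, Pi.single_apply]
  by_cases hka : a = k <;> by_cases hkb : b = k <;> simp [hka, hkb]
  ring

theorem poissonBracket_im_prod_normSq_apply (a : Fin n) (z : Fin n → ℂ) :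
    poissonBracket n (fun w => (∏ i, w i).im) (fun w => Complex.normSq (w a)) z
      = -2 * (∏ i, z i).re := by
  rw [poissonBracket, sum_eq_single a (fun k _ hka => by simp [fderiv_normSq_apply, hka.symm])
    (by simp), ← mul_prod_erase univ z (mem_univ a)]
  simp [fderiv_normSq_apply, fderiv_im_prod_single, Complex.mul_re]
  ring

end

/-- The components of the Harvey–Lawson map `F₁ = Im(z₁⋯zₙ)`,
`Fₖ = |z₁|² − |zₖ|²` pairwise Poisson commute on ℂⁿ. -/
theorem statement0 (n : ℕ) (F : Fin (n + 1) → (Fin (n + 1) → ℂ) → ℝ)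
    (hF0 : ∀ z, F 0 z = (∏ i, z i).im)
    (hFk : ∀ k : Fin (n + 1), k ≠ 0 → ∀ z,
      F k z = Complex.normSq (z 0) - Complex.normSq (z k))
    (i j : Fin (n + 1)) (z : Fin (n + 1) → ℂ) :
    poissonBracket (n + 1) (F i) (F j) z = 0 := by
  have hF0' : F 0 = fun w => (∏ i, w i).im := funext hF0
  have hFk' : ∀ k ≠ 0, F k = fun w => Complex.normSq (w 0) - Complex.normSq (w k) :=
    fun k hk => funext (hFk k hk)
  have hd (a : Fin (n + 1)) := (hasFDerivAt_normSq_apply a z).differentiableAt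
  have h0k : ∀ k ≠ 0, poissonBracket (n + 1) (F 0) (F k) z = 0 := fun k hk => by
    rw [hF0', hFk' k hk, poissonBracket_sub_right (hd 0) (hd k),
      poissonBracket_im_prod_normSq_apply, poissonBracket_im_prod_normSq_apply, sub_self]
  rcases eq_or_ne i 0 with rfl | hi <;> rcases eq_or_ne j 0 with rfl | hj
  · exact poissonBracket_self _ z
  · exact h0k j hj
  · rw [poissonBracket_swap, h0k i hi, neg_zero]
  · rw [hFk' i hi, hFk' j hj, poissonBracket_sub_left (hd 0) (hd i),
      poissonBracket_sub_right (hd 0) (hd j), poissonBracket_sub_right (hd 0) (hd j)]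
    simp only [poissonBracket_normSq_apply, sub_self]
end

section
/- Let F : ℂ^n → ℝ^n be the Harvey–Lawson map F₁(z) = Im(∏ zᵢ), Fₖ(z) = |z₁|² − |zₖ|² (k ≥ 2). Then the critical set of F equals the union over 1 ≤ i < j ≤ n of the sets P_{ij} = { z ∈ ℂ^n : zᵢ = zⱼ = 0 }. -/
/-!
Write `P = ∏ zᵢ` and `pᵢ = ∏_{j ≠ i} z_j`, so that
`dF_z(w) = (Im ∑ pᵢ wᵢ, (2⟪z₀, w₀⟫ - 2⟪z_k, w_k⟫)_{k ≥ 1})`.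
If two coordinates vanish, every `pᵢ` vanishes and the first row of `dF_z` is zero.
If at most one coordinate `z_m` vanishes, the rows `k ≥ 1` are solved by `wᵢ = (cᵢ / ‖zᵢ‖²) zᵢ`
with `c_m = 0`, and it remains to find a vector in their common kernel on which the first row
is nonzero: `I / p_m` in coordinate `m` if `z_m = 0`; otherwise the rotation `I • z` (first row
`(n + 1) Re P`) or, when `Re P = 0`, the vector `(zᵢ / ‖zᵢ‖²)ᵢ` (first row `Im P · ∑ ‖zᵢ‖⁻²`).
-/

open Complex Finset ContinuousLinearMap Function
open scoped RealInnerProductSpace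

theorem LinearMap.surjective_of_exists_apply_ne_zero {K V ι : Type*} [Field K] [AddCommGroup V]
    [Module K V] (L : V →ₗ[K] ι → K) (i₀ : ι) (hv : ∃ v, L v i₀ ≠ 0 ∧ ∀ k ≠ i₀, L v k = 0)
    (hw : ∀ t : ι → K, ∃ w, ∀ k ≠ i₀, L w k = t k) : Surjective L := by
  intro t
  obtain ⟨v, hv₀, hv⟩ := hv
  obtain ⟨w, hw⟩ := hw t
  refine ⟨w + ((t i₀ - L w i₀) / L v i₀) • v, funext fun k => ?_⟩
  rcases eq_or_ne k i₀ with rfl | hk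
  · simp only [map_add, map_smul, Pi.add_apply, Pi.smul_apply, smul_eq_mul]
    field_simp
    ring
  · simp [hw k hk, hv k hk]

theorem inner_div_norm_sq_smul_self {F : Type*} [NormedAddCommGroup F] [InnerProductSpace ℝ F]
    {x : F} (hx : x ≠ 0) (r : ℝ) : ⟪x, (r / ‖x‖ ^ 2) • x⟫ = r := by
  rw [real_inner_smul_right, real_inner_self_eq_norm_sq]
  field_simp [norm_ne_zero_iff.mpr hx]

section prodErase

variable {ι M : Type*} [Fintype ι] [DecidableEq ι]

def prodErase [CommMonoid M] (z : ι → M) (i : ι) : M := ∏ j ∈ univ.erase i, z j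

theorem prodErase_mul_self [CommMonoid M] (z : ι → M) (i : ι) :
    prodErase z i * z i = ∏ j, z j :=
  prod_erase_mul _ _ (mem_univ i)

theorem prodErase_eq_zero [CommMonoidWithZero M] {z : ι → M} {i j : ι} (hij : i ≠ j)
    (hj : z j = 0) : prodErase z i = 0 :=
  prod_eq_zero (mem_erase.2 ⟨hij.symm, mem_univ j⟩) hj

theorem prodErase_ne_zero [CommMonoidWithZero M] [Nontrivial M] [NoZeroDivisors M] {z : ι → M}
    {i : ι} (hz : ∀ j ≠ i, z j ≠ 0) : prodErase z i ≠ 0 :=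
  prod_ne_zero_iff.2 fun j hj => hz j (ne_of_mem_erase hj)

end prodErase

section HarveyLawson

variable {n : ℕ}

noncomputable def harveyLawson (z : Fin (n + 1) → ℂ) : Fin (n + 1) → ℝ :=
  fun k => if k = 0 then (∏ i, z i).im else ‖z 0‖ ^ 2 - ‖z k‖ ^ 2

noncomputable def harveyLawsonDeriv (z : Fin (n + 1) → ℂ) :
    (Fin (n + 1) → ℂ) →L[ℝ] Fin (n + 1) → ℝ :=
  pi fun k => if k = 0 then imCLM.comp (∑ i, prodErase z i • proj i)
    else 2 • (innerSL ℝ (z 0)).comp (proj 0) - 2 • (innerSL ℝ (z k)).comp (proj k)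

theorem hasFDerivAt_harveyLawson (z : Fin (n + 1) → ℂ) :
    HasFDerivAt harveyLawson (harveyLawsonDeriv z) z := by
  refine hasFDerivAt_pi.2 fun k => ?_
  rcases eq_or_ne k 0 with rfl | hk
  · simp only [harveyLawson, if_true]
    exact imCLM.hasFDerivAt.comp z hasFDerivAt_finsetProd
  · simp only [harveyLawson, if_neg hk]
    exact (hasFDerivAt_apply 0 z).norm_sq.sub (hasFDerivAt_apply k z).norm_sq

theorem harveyLawsonDeriv_apply_zero (z w : Fin (n + 1) → ℂ) :
    harveyLawsonDeriv z w 0 = (∑ i, prodErase z i * w i).im := by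
  simp [harveyLawsonDeriv]

theorem harveyLawsonDeriv_apply_of_ne_zero (z w : Fin (n + 1) → ℂ) {k : Fin (n + 1)}
    (hk : k ≠ 0) : harveyLawsonDeriv z w k = 2 * ⟪z 0, w 0⟫ - 2 * ⟪z k, w k⟫ := by
  simp only [harveyLawsonDeriv, coe_pi', hk, ↓reduceIte, sub_apply, smul_apply,
    ContinuousLinearMap.comp_apply, proj_apply, coe_innerSL_apply, nsmul_eq_mul, Nat.cast_ofNat]

theorem harveyLawsonDeriv_apply_eq_zero_of_forall_inner_eq (z w : Fin (n + 1) → ℂ) (c : ℝ)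
    (hw : ∀ i, ⟪z i, w i⟫ = c) : ∀ k ≠ 0, harveyLawsonDeriv z w k = 0 := fun k hk => by
  rw [harveyLawsonDeriv_apply_of_ne_zero z w hk, hw, hw, sub_self]

theorem exists_harveyLawsonDeriv_apply_eq {z : Fin (n + 1) → ℂ} {m : Fin (n + 1)}
    (hz : ∀ i ≠ m, z i ≠ 0) (t : Fin (n + 1) → ℝ) :
    ∃ w, ∀ k ≠ 0, harveyLawsonDeriv z w k = t k := by
  set e : Fin (n + 1) → ℝ := fun i => if i = 0 then 0 else t i / 2
  refine ⟨fun i => ((e m - e i) / ‖z i‖ ^ 2) • z i, fun k hk => ?_⟩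
  have hinner : ∀ i, ⟪z i, ((e m - e i) / ‖z i‖ ^ 2) • z i⟫ = e m - e i := by
    intro i
    rcases eq_or_ne i m with rfl | hi
    · simp
    · exact inner_div_norm_sq_smul_self (hz i hi) _
  rw [harveyLawsonDeriv_apply_of_ne_zero _ _ hk, hinner, hinner]
  simp only [e, if_pos, if_neg hk]
  ring

theorem harveyLawsonDeriv_I_smul (z : Fin (n + 1) → ℂ) :
    harveyLawsonDeriv z (I • z) 0 = (n + 1) * (∏ i, z i).re ∧
      ∀ k ≠ 0, harveyLawsonDeriv z (I • z) k = 0 := by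
  refine ⟨?_, harveyLawsonDeriv_apply_eq_zero_of_forall_inner_eq z _ 0 fun i => ?_⟩
  · simp [harveyLawsonDeriv_apply_zero, mul_left_comm _ I, prodErase_mul_self]
  · rw [Pi.smul_apply, smul_eq_mul, Complex.inner, mul_assoc, mul_conj]
    simp

theorem harveyLawsonDeriv_inv_norm_sq_smul {z : Fin (n + 1) → ℂ} (hz : ∀ i, z i ≠ 0) :
    harveyLawsonDeriv z (fun i => (1 / ‖z i‖ ^ 2) • z i) 0 =
        (∑ i, 1 / ‖z i‖ ^ 2) * (∏ i, z i).im ∧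
      ∀ k ≠ 0, harveyLawsonDeriv z (fun i => (1 / ‖z i‖ ^ 2) • z i) k = 0 := by
  refine ⟨?_, harveyLawsonDeriv_apply_eq_zero_of_forall_inner_eq z _ 1 fun i =>
    inner_div_norm_sq_smul_self (hz i) 1⟩
  simp only [harveyLawsonDeriv_apply_zero, Complex.real_smul, mul_left_comm (prodErase z _),
    prodErase_mul_self, Complex.im_sum, Complex.im_ofReal_mul, sum_mul]

theorem harveyLawsonDeriv_single {z : Fin (n + 1) → ℂ} {k : Fin (n + 1)} (hk : z k = 0)
    (hz : ∀ i ≠ k, z i ≠ 0) :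
    harveyLawsonDeriv z (Pi.single k (I / prodErase z k)) 0 = 1 ∧
      ∀ j ≠ 0, harveyLawsonDeriv z (Pi.single k (I / prodErase z k)) j = 0 := by
  refine ⟨?_, harveyLawsonDeriv_apply_eq_zero_of_forall_inner_eq z _ 0 fun i => ?_⟩
  · rw [harveyLawsonDeriv_apply_zero, sum_eq_single k (fun i _ hi => by simp [hi]) (by simp)]
    simp [mul_div_cancel₀ _ (prodErase_ne_zero hz)]
  · rcases eq_or_ne i k with rfl | hi
    · simp [hk]
    · simp [hi]

theorem harveyLawsonDeriv_surjective {z : Fin (n + 1) → ℂ}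
    (hz : ∀ i j, i ≠ j → z i = 0 → z j ≠ 0) : Surjective (harveyLawsonDeriv z) := by
  obtain ⟨m, hm⟩ : ∃ m, ∀ i ≠ m, z i ≠ 0 := by
    by_cases h : ∃ m, z m = 0
    · obtain ⟨m, hm⟩ := h
      exact ⟨m, fun i hi => hz m i hi.symm hm⟩
    · push Not at h
      exact ⟨0, fun i _ => h i⟩
  refine (harveyLawsonDeriv z).toLinearMap.surjective_of_exists_apply_ne_zero 0 ?_
    (exists_harveyLawsonDeriv_apply_eq hm)
  simp only [ContinuousLinearMap.coe_coe]
  by_cases hzm : z m = 0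
  · obtain ⟨h₀, hk⟩ := harveyLawsonDeriv_single hzm hm
    exact ⟨_, by simp [h₀], hk⟩
  have hz : ∀ i, z i ≠ 0 := fun i => by
    rcases eq_or_ne i m with rfl | hi
    exacts [hzm, hm i hi]
  by_cases hre : (∏ i, z i).re = 0
  · have him : (∏ i, z i).im ≠ 0 := fun him =>
      prod_ne_zero_iff.2 (fun i _ => hz i) (Complex.ext hre him)
    have hsum : 0 < ∑ i, 1 / ‖z i‖ ^ 2 :=
      sum_pos (fun i _ => one_div_pos.2 (pow_pos (norm_pos_iff.2 (hz i)) 2)) univ_nonempty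
    obtain ⟨h₀, hk⟩ := harveyLawsonDeriv_inv_norm_sq_smul hz
    exact ⟨_, by rw [h₀]; exact mul_ne_zero hsum.ne' him, hk⟩
  · obtain ⟨h₀, hk⟩ := harveyLawsonDeriv_I_smul z
    exact ⟨_, by rw [h₀]; positivity, hk⟩

theorem harveyLawsonDeriv_apply_zero_eq_zero {z : Fin (n + 1) → ℂ} {i j : Fin (n + 1)}
    (hij : i ≠ j) (hi : z i = 0) (hj : z j = 0) (w : Fin (n + 1) → ℂ) :
    harveyLawsonDeriv z w 0 = 0 := by
  have hprod : ∀ k, prodErase z k = 0 := fun k => by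
    rcases eq_or_ne k i with rfl | hk
    exacts [prodErase_eq_zero hij hj, prodErase_eq_zero hk hi]
  simp [harveyLawsonDeriv_apply_zero, hprod]

theorem harveyLawsonDeriv_surjective_iff (z : Fin (n + 1) → ℂ) :
    Surjective (harveyLawsonDeriv z) ↔ ∀ i j, i < j → ¬(z i = 0 ∧ z j = 0) := by
  constructor
  · rintro hsurj i j hij ⟨hi, hj⟩
    obtain ⟨w, hw⟩ := hsurj 1
    simpa [harveyLawsonDeriv_apply_zero_eq_zero hij.ne hi hj] using congrFun hw 0
  · intro h
    refine harveyLawsonDeriv_surjective fun i j hij hi hj => ?_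
    rcases hij.lt_or_gt with hlt | hgt
    exacts [h i j hlt ⟨hi, hj⟩, h j i hgt ⟨hj, hi⟩]

end HarveyLawson

/-- The critical set of the Harvey–Lawson map `F : ℂⁿ → ℝⁿ`,
`F₁(z) = Im(∏ zᵢ)`, `Fₖ(z) = |z₁|² − |zₖ|²` (k ≥ 2), i.e. the set of points
where the differential of `F` is not surjective, equals the union over all
pairs `i < j` of the sets `P_{ij} = { z : zᵢ = zⱼ = 0 }`. -/
theorem statement1 (n : ℕ) (F : (Fin (n + 1) → ℂ) → (Fin (n + 1) → ℝ))
    (hF0 : ∀ z, F z 0 = (∏ i, z i).im)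
    (hFk : ∀ z, ∀ k : Fin (n + 1), k ≠ 0 →
      F z k = Complex.normSq (z 0) - Complex.normSq (z k)) :
    {z | ¬ Function.Surjective (fderiv ℝ F z)} =
      ⋃ (i : Fin (n + 1)) (j : Fin (n + 1)) (_ : i < j),
        {z | z i = 0 ∧ z j = 0} := by
  have hF : F = harveyLawson := funext fun z => funext fun k => by
    rcases eq_or_ne k 0 with rfl | hk
    · simp [harveyLawson, hF0]
    · simp [harveyLawson, hk, hFk z k hk, Complex.normSq_eq_norm_sq]
  subst hF
  ext z
  rw [Set.mem_ofPred_eq, (hasFDerivAt_harveyLawson z).fderiv, harveyLawsonDeriv_surjective_iff]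
  simp only [Set.mem_iUnion, Set.mem_ofPred_eq, exists_prop, not_forall, not_not]
end

section
/- Fix ε > 0 and let ζ_ε(b) be the maximal real solution of P_b(x) − ε² = 0, where P_b(x) = x∏_{j=2}^{n}(x − bⱼ) − b₁². Then P_b'(ζ_ε(b)) ≠ 0 for all b ∈ ℝ^n, ζ₀(b) < ζ_ε(b) for all b, and ζ_ε is a smooth function on all of ℝ^n. -/
namespace St7aux

variable {m : ℕ}

noncomputable def r (b : ℝ × (Fin m → ℝ)) : Fin (m + 1) → ℝ := Fin.cases 0 b.2

noncomputable def M (b : ℝ × (Fin m → ℝ)) : ℝ :=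
  Finset.univ.sup' ⟨0, Finset.mem_univ 0⟩ (r b)

noncomputable def Q (b : ℝ × (Fin m → ℝ)) (x : ℝ) : ℝ := ∏ i, (x - r b i)

lemma prod_eq (b : ℝ × (Fin m → ℝ)) (x : ℝ) :
    x * ∏ j, (x - b.2 j) = Q b x := by
  rw [Q, Fin.prod_univ_succ]
  simp [r]

lemma le_M (b : ℝ × (Fin m → ℝ)) (i : Fin (m + 1)) : r b i ≤ M b :=
  Finset.le_sup' _ (Finset.mem_univ i)

lemma contQ (b : ℝ × (Fin m → ℝ)) : Continuous (Q b) :=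
  continuous_finset_prod _ fun i _ => continuous_id.sub continuous_const

lemma Q_M (b : ℝ × (Fin m → ℝ)) : Q b (M b) = 0 := by
  obtain ⟨i, -, hi⟩ := Finset.exists_mem_eq_sup' (⟨0, Finset.mem_univ 0⟩ :
    (Finset.univ : Finset (Fin (m+1))).Nonempty) (r b)
  exact Finset.prod_eq_zero (Finset.mem_univ i) (by rw [← hi, M]; ring)

lemma monoQ (b : ℝ × (Fin m → ℝ)) : StrictMonoOn (Q b) (Set.Ici (M b)) := by
  intro x hx y hy hxy
  have hy' : ∀ i, 0 < y - r b i := fun i =>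
    sub_pos.2 ((le_M b i).trans_lt (lt_of_le_of_lt hx hxy))
  by_cases h0 : Q b x = 0
  · rw [h0]; exact Finset.prod_pos fun i _ => hy' i
  · have hx' : ∀ i, 0 < x - r b i := by
      intro i
      rcases lt_or_eq_of_le (sub_nonneg.2 ((le_M b i).trans hx)) with h | h
      · exact h
      · exact absurd (Finset.prod_eq_zero (Finset.mem_univ i) h.symm) h0
    exact Finset.prod_lt_prod_of_nonempty (fun i _ => hx' i)
      (fun i _ => by simpa using hxy) Finset.univ_nonempty

/-- there is a solution of `Q b x = c` above `M b`. -/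
lemma exists_solution (b : ℝ × (Fin m → ℝ)) {c : ℝ} (hc : 0 ≤ c) :
    ∃ x, M b ≤ x ∧ Q b x = c := by
  have hMR : M b ≤ M b + c + 1 := by linarith
  have hR : c ≤ Q b (M b + c + 1) := by
    have h1 : ∀ i, c + 1 ≤ M b + c + 1 - r b i := fun i => by
      have := le_M b i; linarith
    calc c ≤ c + 1 := by linarith
    _ ≤ (c + 1) ^ (m + 1) := le_self_pow₀ (by linarith) (by omega)
    _ = ∏ _i : Fin (m + 1), (c + 1) := by
        rw [Finset.prod_const]; simp
    _ ≤ Q b (M b + c + 1) :=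
        Finset.prod_le_prod (fun i _ => by linarith) (fun i _ => h1 i)
  have := intermediate_value_Icc hMR (contQ b).continuousOn
  have hmem : c ∈ Set.Icc (Q b (M b)) (Q b (M b + c + 1)) := by
    rw [Q_M]; exact ⟨hc, hR⟩
  obtain ⟨x, hx, hxc⟩ := this hmem
  exact ⟨x, hx.1, hxc⟩

lemma hasDerivQ (b : ℝ × (Fin m → ℝ)) (x : ℝ) :
    HasDerivAt (Q b) (∑ i, ∏ j ∈ Finset.univ.erase i, (x - r b j)) x := by
  have h := HasDerivAt.fun_finsetProd (u := Finset.univ) (f := fun i (y : ℝ) => y - r b i)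
    (f' := fun _ => (1:ℝ)) (x := x)
    (fun i _ => (hasDerivAt_id x).sub_const (r b i))
  simp at h
  exact h

lemma derivQ_pos (b : ℝ × (Fin m → ℝ)) {x : ℝ} (hx : M b < x) :
    0 < ∑ i, ∏ j ∈ Finset.univ.erase i, (x - r b j) := by
  refine Finset.sum_pos (fun i _ => Finset.prod_pos fun j _ => ?_) Finset.univ_nonempty
  exact sub_pos.2 ((le_M b j).trans_lt hx)

end St7aux


open St7aux

/-- Fix `ε > 0` and let `ζ_ε(b)` be the maximal real solution of `P_b(x) = ε²`,
where `P_b(x) = x·∏_{j=2}^{n}(x − bⱼ) − b₁²` and `ζ₀(b)` is the maximal real root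
of `P_b`. Then `P_b'(ζ_ε(b)) ≠ 0` for all `b`, `ζ₀(b) < ζ_ε(b)` for all `b`, and
`ζ_ε` is a `C^∞` function on all of `ℝⁿ`. -/
theorem statement7 (m : ℕ) (ε : ℝ) (hε : 0 < ε)
    (P : ℝ × (Fin m → ℝ) → ℝ → ℝ)
    (hP : ∀ b x, P b x = x * (∏ j, (x - b.2 j)) - b.1 ^ 2)
    (ζ₀ ζε : ℝ × (Fin m → ℝ) → ℝ)
    (hζ₀root : ∀ b, P b (ζ₀ b) = 0)
    (hζ₀max : ∀ b x, P b x = 0 → x ≤ ζ₀ b)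
    (hζεroot : ∀ b, P b (ζε b) = ε ^ 2)
    (hζεmax : ∀ b x, P b x = ε ^ 2 → x ≤ ζε b) :
    (∀ b, deriv (P b) (ζε b) ≠ 0) ∧ (∀ b, ζ₀ b < ζε b) ∧ ContDiff ℝ (⊤ : ℕ∞) ζε := by
  have hε2 : (0:ℝ) < ε ^ 2 := by positivity
  have hPQ : ∀ b x, P b x = Q b x - b.1 ^ 2 := fun b x => by
    rw [hP, prod_eq]
  have hζεM : ∀ b, M b < ζε b := by
    intro b
    obtain ⟨x, hx1, hx2⟩ := exists_solution b (c := b.1 ^ 2 + ε ^ 2) (by positivity)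
    have hxle : x ≤ ζε b := hζεmax b x (by rw [hPQ, hx2]; ring)
    rcases lt_or_eq_of_le hx1 with h | h
    · exact h.trans_le hxle
    · exfalso
      rw [← h, Q_M] at hx2
      nlinarith
  have hζ₀M : ∀ b, M b ≤ ζ₀ b := by
    intro b
    obtain ⟨x, hx1, hx2⟩ := exists_solution b (c := b.1 ^ 2) (by positivity)
    exact hx1.trans (hζ₀max b x (by rw [hPQ, hx2]; ring))
  have hQζε : ∀ b, Q b (ζε b) = b.1 ^ 2 + ε ^ 2 := fun b => by
    have := hζεroot b; rw [hPQ] at this; linarith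
  have hQζ₀ : ∀ b, Q b (ζ₀ b) = b.1 ^ 2 := fun b => by
    have := hζ₀root b; rw [hPQ] at this; linarith
  have hPderiv : ∀ b x, HasDerivAt (P b)
      (∑ i, ∏ j ∈ Finset.univ.erase i, (x - r b j)) x := by
    intro b x
    have h : P b = fun y => Q b y - b.1 ^ 2 := funext fun y => hPQ b y
    rw [h]
    exact (hasDerivQ b x).sub_const _
  refine ⟨fun b => ?_, fun b => ?_, ?_⟩
  · rw [(hPderiv b (ζε b)).deriv]
    exact (derivQ_pos b (hζεM b)).ne'
  · by_contra h
    push_neg at h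
    have h1 := (monoQ b).monotoneOn (Set.mem_Ici.2 (hζεM b).le)
      (Set.mem_Ici.2 (hζ₀M b)) h
    rw [hQζε, hQζ₀] at h1
    nlinarith
  · -- smoothness
    rw [contDiff_iff_contDiffAt]
    intro b₀
    set x₀ := ζε b₀ with hx₀
    set p₀ : (ℝ × (Fin m → ℝ)) × ℝ := (b₀, x₀) with hp₀
    set f : (ℝ × (Fin m → ℝ)) × ℝ → ℝ :=
      fun p => p.2 * (∏ j, (p.2 - p.1.2 j)) - p.1.1 ^ 2 with hf
    have hfP : ∀ p : (ℝ × (Fin m → ℝ)) × ℝ, f p = P p.1 p.2 := fun p => (hP p.1 p.2).symm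
    have hfc : ContDiff ℝ (⊤ : ℕ∞) f := by
      have h1 : ContDiff ℝ (⊤ : ℕ∞) (fun p : (ℝ × (Fin m → ℝ)) × ℝ => p.1.1) :=
        contDiff_fst.comp contDiff_fst
      have h2 : ∀ j, ContDiff ℝ (⊤ : ℕ∞) (fun p : (ℝ × (Fin m → ℝ)) × ℝ => p.1.2 j) := fun j =>
        ((contDiff_apply ℝ ℝ j).comp contDiff_snd).comp contDiff_fst
      exact (contDiff_snd.mul (contDiff_prod fun j _ => contDiff_snd.sub (h2 j))).sub
        (h1.pow 2)
    set Φ : (ℝ × (Fin m → ℝ)) × ℝ → (ℝ × (Fin m → ℝ)) × ℝ := fun p => (p.1, f p) with hΦ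
    have hΦc : ContDiff ℝ (⊤ : ℕ∞) Φ := contDiff_fst.prodMk hfc
    set D : (ℝ × (Fin m → ℝ)) × ℝ →L[ℝ] ℝ := fderiv ℝ f p₀ with hD
    have hfD : HasFDerivAt f D p₀ :=
      (hfc.differentiable (by simp)).differentiableAt.hasFDerivAt
    set c : ℝ := D ((0 : ℝ × (Fin m → ℝ)), (1:ℝ)) with hc
    have hcurve : HasDerivAt (fun x : ℝ => (((b₀, x)) : (ℝ × (Fin m → ℝ)) × ℝ))
        ((0 : ℝ × (Fin m → ℝ)), (1:ℝ)) x₀ :=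
      (hasDerivAt_const x₀ b₀).prodMk (hasDerivAt_id x₀)
    have hPb₀ : HasDerivAt (P b₀) c x₀ := by
      have h := hfD.comp_hasDerivAt x₀ hcurve
      have heq : P b₀ = f ∘ (fun x : ℝ => (((b₀, x)) : (ℝ × (Fin m → ℝ)) × ℝ)) :=
        funext fun x => (hfP (b₀, x)).symm
      rw [heq]
      exact h
    have hcval : c = ∑ i, ∏ j ∈ Finset.univ.erase i, (x₀ - r b₀ j) :=
      hPb₀.unique (hPderiv b₀ x₀)
    have hcpos : 0 < c := hcval ▸ derivQ_pos b₀ (hζεM b₀)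
    have hcne : c ≠ 0 := hcpos.ne'
    have hkey : ∀ (u : ℝ × (Fin m → ℝ)) (v : ℝ), D (u, v) = D (u, 0) + v * c := by
      intro u v
      have h : ((u, v) : (ℝ × (Fin m → ℝ)) × ℝ)
          = (u, (0:ℝ)) + v • ((0 : ℝ × (Fin m → ℝ)), (1:ℝ)) := by
        simp [Prod.ext_iff]
      rw [h, map_add, map_smul, smul_eq_mul, hc]
    set T : (ℝ × (Fin m → ℝ)) × ℝ →L[ℝ] (ℝ × (Fin m → ℝ)) × ℝ :=
      (ContinuousLinearMap.fst ℝ (ℝ × (Fin m → ℝ)) ℝ).prod D with hT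
    set S : (ℝ × (Fin m → ℝ)) × ℝ →L[ℝ] (ℝ × (Fin m → ℝ)) × ℝ :=
      (ContinuousLinearMap.fst ℝ (ℝ × (Fin m → ℝ)) ℝ).prod
      (c⁻¹ • ((ContinuousLinearMap.snd ℝ (ℝ × (Fin m → ℝ)) ℝ) -
        (D.comp ((ContinuousLinearMap.inl ℝ (ℝ × (Fin m → ℝ)) ℝ).comp
          (ContinuousLinearMap.fst ℝ (ℝ × (Fin m → ℝ)) ℝ))))) with hS
    have hST : Function.LeftInverse S T := by
      intro p
      obtain ⟨u, v⟩ := p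
      simp only [hT, hS, ContinuousLinearMap.prod_apply, ContinuousLinearMap.coe_fst',
        ContinuousLinearMap.smul_apply, ContinuousLinearMap.sub_apply,
        ContinuousLinearMap.coe_snd', ContinuousLinearMap.coe_comp', Function.comp_apply,
        ContinuousLinearMap.inl_apply]
      refine Prod.ext rfl ?_
      show c⁻¹ • (D (u, v) - D (u, 0)) = v
      rw [hkey u v, smul_eq_mul]
      field_simp
      ring
    have hTS : Function.RightInverse S T := by
      intro p
      obtain ⟨u, v⟩ := p
      simp only [hT, hS, ContinuousLinearMap.prod_apply, ContinuousLinearMap.coe_fst',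
        ContinuousLinearMap.smul_apply, ContinuousLinearMap.sub_apply,
        ContinuousLinearMap.coe_snd', ContinuousLinearMap.coe_comp', Function.comp_apply,
        ContinuousLinearMap.inl_apply]
      refine Prod.ext rfl ?_
      show D (u, c⁻¹ • (v - D (u, 0))) = v
      rw [hkey u (c⁻¹ • (v - D (u, 0))), smul_eq_mul]
      field_simp
      ring
    set e : ((ℝ × (Fin m → ℝ)) × ℝ) ≃L[ℝ] ((ℝ × (Fin m → ℝ)) × ℝ) :=
      ContinuousLinearEquiv.equivOfInverse T S hST hTS with he
    have hΦT : HasFDerivAt Φ (e : ((ℝ × (Fin m → ℝ)) × ℝ) →L[ℝ] ((ℝ × (Fin m → ℝ)) × ℝ)) p₀ := by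
      have h : HasFDerivAt Φ T p₀ := (hasFDerivAt_fst).prodMk hfD
      convert h using 1
      rfl
    have hn : ((⊤ : ℕ∞) : WithTop ℕ∞) ≠ 0 := by simp
    have hcd : ContDiffAt ℝ (⊤ : ℕ∞) Φ p₀ := hΦc.contDiffAt
    have hstrict : HasStrictFDerivAt Φ
        (e : ((ℝ × (Fin m → ℝ)) × ℝ) →L[ℝ] ((ℝ × (Fin m → ℝ)) × ℝ)) p₀ :=
      hcd.hasStrictFDerivAt' hΦT hn
    set g : (ℝ × (Fin m → ℝ)) × ℝ → (ℝ × (Fin m → ℝ)) × ℝ := hcd.localInverse hΦT hn with hg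
    have hgdef : g = hstrict.localInverse Φ e p₀ := rfl
    have hgsm : ContDiffAt ℝ (⊤ : ℕ∞) g (Φ p₀) := hcd.to_localInverse hΦT hn
    have hΦp₀ : Φ p₀ = (b₀, ε ^ 2) := by
      simp only [hΦ, hp₀]
      rw [hfP]
      exact Prod.ext rfl (hζεroot b₀)
    have hgΦ : g (Φ p₀) = p₀ := hcd.localInverse_apply_image hΦT hn
    have hgcont : ContinuousAt g (Φ p₀) := by
      rw [hgdef]; exact hstrict.localInverse_continuousAt
    have hgright : ∀ᶠ y in nhds (Φ p₀), Φ (g y) = y := by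
      rw [hgdef]; exact hstrict.eventually_right_inverse
    set ζ' : ℝ × (Fin m → ℝ) → ℝ := fun b => (g (b, ε ^ 2)).2 with hζ'
    have hbcont : ContinuousAt (fun b : ℝ × (Fin m → ℝ) => ((b, ε ^ 2) : (ℝ × (Fin m → ℝ)) × ℝ)) b₀ :=
      (continuous_id.prodMk continuous_const).continuousAt
    have hbb₀ : ((b₀, ε ^ 2) : (ℝ × (Fin m → ℝ)) × ℝ) = Φ p₀ := hΦp₀.symm
    have hζ'sm : ContDiffAt ℝ (⊤ : ℕ∞) ζ' b₀ := by
      refine ContDiffAt.comp b₀ contDiffAt_snd ?_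
      refine ContDiffAt.comp b₀ ?_ ((contDiff_id.prodMk contDiff_const).contDiffAt)
      rw [hbb₀]; exact hgsm
    have hζ'b₀ : ζ' b₀ = x₀ := by
      have : g ((b₀, ε ^ 2) : (ℝ × (Fin m → ℝ)) × ℝ) = p₀ := by rw [hbb₀]; exact hgΦ
      rw [hζ']; simp only [this]
      rfl
    have hζ'cont : ContinuousAt ζ' b₀ := by
      refine ContinuousAt.snd ?_
      refine ContinuousAt.comp ?_ hbcont
      rw [hbb₀]; exact hgcont
    -- eventual equality of ζ' and ζε
    have hevP : ∀ᶠ b in nhds b₀, P b (ζ' b) = ε ^ 2 := by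
      have h1 : ∀ᶠ b in nhds b₀, Φ (g (b, ε ^ 2)) = (b, ε ^ 2) := by
        have := hbcont.tendsto
        rw [hbb₀] at this
        exact this.eventually hgright
      filter_upwards [h1] with b hb
      have hb1 : (g ((b, ε ^ 2) : (ℝ × (Fin m → ℝ)) × ℝ)).1 = b := congrArg Prod.fst hb
      have hb2 : f (g ((b, ε ^ 2) : (ℝ × (Fin m → ℝ)) × ℝ)) = ε ^ 2 := congrArg Prod.snd hb
      rw [hfP] at hb2
      rw [hb1] at hb2
      exact hb2
    -- eventually M b is small and ζ' b large
    have hδ : M b₀ < x₀ := hζεM b₀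
    set δ : ℝ := (x₀ - M b₀) / 2 with hδdef
    have hδpos : 0 < δ := by rw [hδdef]; linarith
    have hrcont : ∀ i : Fin (m + 1), Continuous (fun b : ℝ × (Fin m → ℝ) => r b i) := by
      intro i
      refine Fin.cases ?_ ?_ i
      · exact continuous_const
      · exact fun j => (continuous_apply j).comp continuous_snd
    have hevM : ∀ᶠ b in nhds b₀, M b < x₀ - δ := by
      have h1 : ∀ i : Fin (m + 1), ∀ᶠ b in nhds b₀, r b i < x₀ - δ := by
        intro i
        have hlt : r b₀ i < x₀ - δ := by
          have := le_M b₀ i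
          rw [hδdef]; linarith
        exact ((hrcont i).continuousAt).eventually_lt continuousAt_const hlt
      have h2 : ∀ᶠ b in nhds b₀, ∀ i : Fin (m + 1), r b i < x₀ - δ :=
        Filter.eventually_all.2 h1
      filter_upwards [h2] with b hb
      exact (Finset.sup'_lt_iff _).2 fun i _ => hb i
    have hevζ' : ∀ᶠ b in nhds b₀, x₀ - δ < ζ' b := by
      have : Set.Ioi (x₀ - δ) ∈ nhds (ζ' b₀) := by
        rw [hζ'b₀]
        exact Ioi_mem_nhds (by linarith)
      exact hζ'cont.eventually_mem this
    have hevEq : ζε =ᶠ[nhds b₀] ζ' := by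
      filter_upwards [hevP, hevM, hevζ'] with b h1 h2 h3
      have hQb : Q b (ζ' b) = b.1 ^ 2 + ε ^ 2 := by
        rw [hPQ] at h1; linarith
      have hmemζ' : ζ' b ∈ Set.Ici (M b) := le_of_lt (h2.trans h3)
      have hmemζε : ζε b ∈ Set.Ici (M b) := (hζεM b).le
      exact ((monoQ b).injOn hmemζε hmemζ' (by rw [hQζε, hQb]))
    exact hζ'sm.congr_of_eventuallyEq hevEq
end

section
/- For b ∈ ℝ^n off the discriminant Δ, the time α(b) needed for the Hamiltonian flow of F₁ to carry the section Σ⁻(b) to the T^{n−1}-orbit of Σ⁺(b) satisfies α(b) = −∫_{ζ₀(b)}^{ζ₁(b)} dx / √(P_b(x)), where ζ₀(b) is the maximal real root of P_b(x) = x(x−b₂)⋯(x−bₙ) − b₁² and ζ₁(b) the maximal real solution of P_b(x) = 1. -/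
/-!
Write `g = ∏ zₖ`. Along the Hamiltonian flow of `Im g`, `ġ = -∑ₖ |∏_{i≠k} zᵢ|²` is real and
nonpositive and `d|zⱼ|²/dt = -2 Re g` for every `j`. So `Im g = b₁` and the differences
`|zⱼ|² - |z₁|²` are conserved, and `x = |z₁|²`, `u = Re g` satisfy `ẋ = -2u`, `u̇ = -P_b'(x) ≤ 0`
and `u² = P_b(x)`. From `Σ⁻(b)` (`u = -1`, `x = ζ₁`) to the orbit of `Σ⁺(b)` (`u = 1`, `x = ζ₁`)
time runs backwards, and `u` vanishes exactly once, where `x = ζ₀` and `u̇ = -P_b'(ζ₀) ≠ 0`. On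
either side of that instant `x` moves monotonically between `ζ₀` and `ζ₁` with `|ẋ| = 2√(P_b(x))`,
which takes time `½ ∫_{ζ₀}^{ζ₁} dx / √(P_b(x))`.
-/

open Finset Set Filter Topology MeasureTheory

theorem eqOn_uIcc_of_hasDerivAt_zero {E : Type*} [NormedAddCommGroup E] [NormedSpace ℝ E]
    {f : ℝ → E} {a b : ℝ} (hf : ∀ t ∈ uIcc a b, HasDerivAt f 0 t) :
    ∀ t ∈ uIcc a b, f t = f a := by
  intro t ht
  have := (convex_uIcc a b).norm_image_sub_le_of_norm_hasDerivWithin_le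
    (C := 0) (fun s hs => (hf s hs).hasDerivWithinAt) (fun _ _ => by simp) left_mem_uIcc ht
  simpa [sub_eq_zero] using this

theorem HasDerivAt.complex_re {g : ℝ → ℂ} {g' : ℂ} {t : ℝ} (h : HasDerivAt g g' t) :
    HasDerivAt (fun s => (g s).re) g'.re t :=
  Complex.reCLM.hasFDerivAt.comp_hasDerivAt t h

theorem HasDerivAt.complex_im {g : ℝ → ℂ} {g' : ℂ} {t : ℝ} (h : HasDerivAt g g' t) :
    HasDerivAt (fun s => (g s).im) g'.im t :=
  Complex.imCLM.hasFDerivAt.comp_hasDerivAt t h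

theorem Complex.normSq_exp_ofReal_mul_I (θ : ℝ) :
    Complex.normSq (Complex.exp (θ * Complex.I)) = 1 := by
  rw [Complex.normSq_eq_norm_sq, Complex.norm_exp_ofReal_mul_I, one_pow]

theorem isLocalMin_of_le_comp {q x : ℝ → ℝ} {a c y : ℝ} (hx : ContinuousOn x (uIcc a c))
    (hqx : ∀ t ∈ uIcc a c, q y ≤ q (x t)) (hy : y ∈ Ioo (x a) (x c)) : IsLocalMin q y := by
  filter_upwards [Ioo_mem_nhds hy.1 hy.2] with z hz
  obtain ⟨t, ht, rfl⟩ := intermediate_value_uIcc hx (Ioo_subset_Icc_self hz |> Icc_subset_uIcc)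
  exact hqx t ht

theorem AntitoneOn.eq_zero_of_hasDerivAt_of_eq {u : ℝ → ℝ} {r s d : ℝ}
    (hu : AntitoneOn u (Icc r s)) (hrs : r < s) (heq : u r = u s) (hd : HasDerivAt u d s) :
    d = 0 := by
  have hconst : ∀ t ∈ Icc r s, u t = u s := fun t ht =>
    le_antisymm (heq ▸ hu ⟨le_rfl, hrs.le⟩ ht ht.1) (hu ht ⟨hrs.le, le_rfl⟩ ht.2)
  have h0 : HasDerivWithinAt u 0 (Icc r s) s :=
    (hasDerivWithinAt_const s _ (u s)).congr hconst rfl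
  exact (uniqueDiffOn_Icc hrs s ⟨hrs.le, le_rfl⟩).eq_deriv _ hd.hasDerivWithinAt h0

theorem AntitoneOn.exists_sign_change {u : ℝ → ℝ} {a b : ℝ} (hab : a ≤ b)
    (hu : AntitoneOn u (Icc a b)) (hcont : ContinuousOn u (Icc a b)) (ha : 0 ≤ u a)
    (hb : u b ≤ 0) (hd : ∀ t ∈ Icc a b, u t = 0 → ∃ d ≠ 0, HasDerivAt u d t) :
    ∃ ts ∈ Icc a b, u ts = 0 ∧ (∀ t ∈ Ico a ts, 0 < u t) ∧ ∀ t ∈ Ioc ts b, u t < 0 := by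
  obtain ⟨ts, hts, huts⟩ := intermediate_value_Icc' hab hcont ⟨hb, ha⟩
  have hflat : ∀ r ∈ Icc a b, ∀ s ∈ Icc a b, r < s → u r = u s → u s ≠ 0 := by
    intro r hr s hs hrs heq hus
    obtain ⟨d, hd0, hds⟩ := hd s hs hus
    exact hd0 ((hu.mono (Icc_subset_Icc hr.1 hs.2)).eq_zero_of_hasDerivAt_of_eq hrs heq hds)
  refine ⟨ts, hts, huts, fun t ht => ?_, fun t ht => ?_⟩
  · have htI : t ∈ Icc a b := ⟨ht.1, ht.2.le.trans hts.2⟩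
    refine (huts ▸ hu htI hts ht.2.le).lt_of_ne fun h => ?_
    exact hflat t htI ts hts ht.2 (h.symm.trans huts.symm) huts
  · have htI : t ∈ Icc a b := ⟨hts.1.trans ht.1.le, ht.2⟩
    refine (huts ▸ hu hts htI ht.1.le).lt_of_ne fun h => ?_
    exact hflat ts hts t htI ht.1 (huts.trans h.symm) h

theorem setIntegral_Icc_inv_sqrt_eq_of_neg {q x u : ℝ → ℝ} {a c : ℝ} (hac : a ≤ c)
    (hx_cont : ContinuousOn x (Icc a c)) (hx : ∀ t ∈ Ioo a c, HasDerivAt x (-2 * u t) t)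
    (hu : ∀ t ∈ Ioo a c, u t < 0) (henergy : ∀ t ∈ Ioo a c, q (x t) = u t ^ 2) :
    ∫ y in Icc (x a) (x c), 1 / √(q y) = 2 * (c - a) := by
  rw [← integral_Icc_deriv_smul_of_deriv_nonneg hx_cont hx
    (fun t ht => by linarith [hu t ht]) hac, integral_Icc_eq_integral_Ioo,
    setIntegral_congr_fun measurableSet_Ioo (g := fun _ => (2 : ℝ))]
  · simp only [integral_const, MeasurableSet.univ, measureReal_restrict_apply, univ_inter,
      Real.volume_real_Ioo, sub_nonneg, hac, sup_of_le_left, smul_eq_mul]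
    ring
  · intro t ht
    have hne : u t ≠ 0 := (hu t ht).ne
    simp only [henergy t ht, Real.sqrt_sq_eq_abs, abs_of_neg (hu t ht), smul_eq_mul]
    field_simp

theorem setIntegral_Icc_inv_sqrt_eq_of_pos {q x u : ℝ → ℝ} {a c : ℝ} (hac : a ≤ c)
    (hx_cont : ContinuousOn x (Icc a c)) (hx : ∀ t ∈ Ioo a c, HasDerivAt x (-2 * u t) t)
    (hu : ∀ t ∈ Ioo a c, 0 < u t) (henergy : ∀ t ∈ Ioo a c, q (x t) = u t ^ 2) :
    ∫ y in Icc (x c) (x a), 1 / √(q y) = 2 * (c - a) := by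
  have hrefl : ∀ t ∈ Ioo (-c) (-a), -t ∈ Ioo a c := fun t ht =>
    ⟨by linarith [ht.2], by linarith [ht.1]⟩
  have h := setIntegral_Icc_inv_sqrt_eq_of_neg (q := q) (x := fun t => x (-t))
    (u := fun t => -u (-t)) (neg_le_neg hac)
    (hx_cont.comp continuousOn_neg fun t ht => ⟨by linarith [ht.2], by linarith [ht.1]⟩)
    (fun t ht => ((hx (-t) (hrefl t ht)).comp t (hasDerivAt_neg t)).congr_deriv (by ring))
    (fun t ht => neg_neg_of_pos (hu (-t) (hrefl t ht)))
    (fun t ht => by rw [neg_sq]; exact henergy _ (hrefl t ht))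
  simp only [neg_neg] at h
  linarith

theorem tendsto_prod_sub_atTop {ι : Type*} [Fintype ι] [Nonempty ι] (a : ι → ℝ) :
    Tendsto (fun y => ∏ k, (y - a k)) atTop atTop := by
  have hdeg : 0 < (∏ k, (Polynomial.X - Polynomial.C (a k))).degree := by
    simp [Polynomial.degree_prod, Fintype.card_pos]
  simpa [Polynomial.eval_prod] using Polynomial.tendsto_atTop_of_leadingCoeff_nonneg _ hdeg
    (by simp [(Polynomial.monic_prod_X_sub_C a univ).leadingCoeff])

theorem hasDerivAt_prod_sub {ι : Type*} [Fintype ι] [DecidableEq ι] (a : ι → ℝ) (y : ℝ) :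
    HasDerivAt (fun y => ∏ k, (y - a k)) (∑ k, ∏ i ∈ univ.erase k, (y - a i)) y := by
  simpa [Finset.prod_fn] using
    HasDerivAt.finsetProd (u := univ) fun k _ => (hasDerivAt_id y).sub_const (a k)

theorem prod_sub_update_eq_mul_prod_erase {ι : Type*} [Fintype ι] [DecidableEq ι] (b : ι → ℝ)
    (i₀ : ι) (y : ℝ) :
    ∏ k, (y - Function.update b i₀ 0 k) = y * ∏ j ∈ univ.erase i₀, (y - b j) := by
  rw [← mul_prod_erase univ _ (mem_univ i₀), Function.update_self, sub_zero]
  exact congrArg (y * ·) <| prod_congr rfl fun j hj => by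
    rw [Function.update_of_ne (ne_of_mem_erase hj)]

theorem le_of_apply_le_of_tendsto_atTop {q : ℝ → ℝ} (hq : Continuous q)
    (htop : Tendsto q atTop atTop) {y z : ℝ} (hz : ∀ x, q x = y → x ≤ z) {x : ℝ}
    (hx : q x ≤ y) : x ≤ z := by
  obtain ⟨M, hM⟩ := (htop.eventually_ge_atTop y).exists_forall_of_atTop
  obtain ⟨r, hr, hqr⟩ := intermediate_value_Icc (le_max_left x M) hq.continuousOn
    ⟨hx, hM _ (le_max_right x M)⟩
  exact hr.1.trans (hz r hqr)

theorem lt_and_forall_le_of_prod_sub {ι : Type*} [Fintype ι] [Nonempty ι] {a : ι → ℝ} {c : ℝ}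
    (hc : 0 ≤ c) {q : ℝ → ℝ} (hq : ∀ y, q y = ∏ k, (y - a k) - c) {ζ₀ ζ₁ : ℝ}
    (hζ₀ : q ζ₀ = 0) (hζ₁ : q ζ₁ = 1) (hζ₁max : ∀ y, q y = 1 → y ≤ ζ₁) :
    ζ₀ < ζ₁ ∧ ∀ k, a k ≤ ζ₁ := by
  have hcont : Continuous q := by
    rw [funext hq]
    exact (continuous_finsetProd _ fun k _ => by fun_prop).sub continuous_const
  have htop : Tendsto q atTop atTop := by
    rw [funext hq]
    exact tendsto_atTop_add_const_right atTop (-c) (tendsto_prod_sub_atTop a)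
  have hle := fun y => le_of_apply_le_of_tendsto_atTop hcont htop hζ₁max (x := y)
  refine ⟨(hle ζ₀ (by rw [hζ₀]; norm_num)).lt_of_ne ?_, fun k => hle (a k) ?_⟩
  · rintro rfl
    linarith
  · rw [hq, prod_eq_zero (mem_univ k) (sub_self _)]
    linarith

/-- The image of the Hamiltonian flow of `Im ∏ zᵢ` under `z ↦ (|z₀|², Re ∏ zᵢ)`, on the time
interval between `0` and `α`. -/
structure IsReducedFlow (q x u : ℝ → ℝ) (α : ℝ) : Prop where
  hasDerivAt_x : ∀ t ∈ uIcc 0 α, HasDerivAt x (-2 * u t) t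
  hasDerivAt_u : ∀ t ∈ uIcc 0 α, HasDerivAt u (-deriv q (x t)) t
  deriv_nonneg : ∀ t ∈ uIcc 0 α, 0 ≤ deriv q (x t)
  energy : ∀ t ∈ uIcc 0 α, q (x t) = u t ^ 2

namespace IsReducedFlow

variable {q x u : ℝ → ℝ} {α : ℝ}

theorem antitoneOn (h : IsReducedFlow q x u α) : AntitoneOn u (uIcc 0 α) :=
  antitoneOn_of_hasDerivWithinAt_nonpos (convex_uIcc 0 α)
    (fun t ht => (h.hasDerivAt_u t ht).continuousAt.continuousWithinAt)
    (fun t ht => (h.hasDerivAt_u t (interior_subset ht)).hasDerivWithinAt)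
    (fun t ht => neg_nonpos.mpr (h.deriv_nonneg t (interior_subset ht)))

/-- If `u` vanished where `x < ζ₀`, then on the path from there back to `x = ζ₁` we would have
`q ∘ x = u² ≥ 0`, making `ζ₀` a local minimum of `q`. -/
theorem eq_root_of_eq_zero (h : IsReducedFlow q x u α) {ζ₀ ζ₁ : ℝ} (hζ₀ : q ζ₀ = 0)
    (hζ₀max : ∀ y, q y = 0 → y ≤ ζ₀) (hreg : deriv q ζ₀ ≠ 0) (h01 : ζ₀ < ζ₁) (hx0 : x 0 = ζ₁)
    {t : ℝ} (ht : t ∈ uIcc 0 α) (hut : u t = 0) : x t = ζ₀ := by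
  have hsub : uIcc t 0 ⊆ uIcc 0 α := uIcc_subset_uIcc ht left_mem_uIcc
  have hq0 : q (x t) = 0 := by rw [h.energy t ht, hut]; ring
  refine le_antisymm (hζ₀max _ hq0) (not_lt.mp fun hlt => hreg ?_)
  refine (isLocalMin_of_le_comp (fun s hs => ?_) (fun s hs => ?_)
    ⟨hlt, hx0 ▸ h01⟩).deriv_eq_zero
  · exact (h.hasDerivAt_x s (hsub hs)).continuousAt.continuousWithinAt
  · rw [hζ₀, h.energy s (hsub hs)]
    positivity

theorem eq_neg_integral (h : IsReducedFlow q x u α) {ζ₀ ζ₁ : ℝ} (hζ₀ : q ζ₀ = 0)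
    (hζ₀max : ∀ y, q y = 0 → y ≤ ζ₀) (hreg : deriv q ζ₀ ≠ 0) (h01 : ζ₀ < ζ₁)
    (hx0 : x 0 = ζ₁) (hxα : x α = ζ₁) (hu0 : u 0 = -1) (huα : u α = 1) :
    α = -∫ y in ζ₀..ζ₁, 1 / √(q y) := by
  have hanti := h.antitoneOn
  have hα : α < 0 := by
    by_contra! hα
    linarith [hanti left_mem_uIcc right_mem_uIcc hα]
  have hzero := fun t => h.eq_root_of_eq_zero hζ₀ hζ₀max hreg h01 hx0 (t := t)
  obtain ⟨hx, hu, -, henergy⟩ := h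
  rw [uIcc_of_ge hα.le] at hx hu henergy hzero hanti
  obtain ⟨ts, hts, huts, hpos, hneg⟩ := hanti.exists_sign_change hα.le
    (fun t ht => (hu t ht).continuousAt.continuousWithinAt) (by linarith) (by linarith)
    (fun t ht hut => ⟨_, by rw [hzero t ht hut]; exact neg_ne_zero.mpr hreg, hu t ht⟩)
  have hxcont : ContinuousOn x (Icc α 0) := fun t ht =>
    (hx t ht).continuousAt.continuousWithinAt
  have hlate : Icc ts 0 ⊆ Icc α 0 := Icc_subset_Icc_left hts.1
  have hearly : Icc α ts ⊆ Icc α 0 := Icc_subset_Icc_right hts.2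
  have hrise := setIntegral_Icc_inv_sqrt_eq_of_neg hts.2 (hxcont.mono hlate)
    (fun t ht => hx t (hlate (Ioo_subset_Icc_self ht)))
    (fun t ht => hneg t (Ioo_subset_Ioc_self ht))
    (fun t ht => henergy t (hlate (Ioo_subset_Icc_self ht)))
  have hfall := setIntegral_Icc_inv_sqrt_eq_of_pos hts.1 (hxcont.mono hearly)
    (fun t ht => hx t (hearly (Ioo_subset_Icc_self ht)))
    (fun t ht => hpos t (Ioo_subset_Ico_self ht))
    (fun t ht => henergy t (hearly (Ioo_subset_Icc_self ht)))
  rw [hzero ts hts huts, hx0] at hrise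
  rw [hzero ts hts huts, hxα] at hfall
  rw [intervalIntegral.integral_of_le h01.le, ← integral_Icc_eq_integral_Ioc]
  linarith

end IsReducedFlow

section HamiltonianFlow

variable {ι : Type*} [Fintype ι] [DecidableEq ι]

def imProdHamiltonianField (z : ι → ℂ) (k : ι) : ℂ :=
  -(starRingEnd ℂ) (∏ i ∈ univ.erase k, z i)

theorem eq_imProdHamiltonianField {F : (ι → ℂ) → ℝ} (hF : ∀ z, F z = (∏ i, z i).im)
    {X : (ι → ℂ) → ι → ℂ}
    (hX : ∀ z v, ∑ k, ((v k).re * (X z k).im - (v k).im * (X z k).re) = fderiv ℝ F z v) :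
    X = imProdHamiltonianField := by
  funext z k
  have hF' : HasFDerivAt F (Complex.imCLM.comp
      (∑ i, (∏ j ∈ univ.erase i, z j) • ContinuousLinearMap.proj (R := ℝ) i)) z := by
    rw [funext hF]
    exact Complex.imCLM.hasFDerivAt.comp z hasFDerivAt_finsetProd
  have hpair : ∀ v : ι → ℂ, ∑ j, ((v j).re * (X z j).im - (v j).im * (X z j).re)
      = (∑ i, (∏ j ∈ univ.erase i, z j) * v i).im := by
    intro v
    simp [hX z v, hF'.fderiv]
  have hsingle : ∀ c : ℂ, c.re * (X z k).im - c.im * (X z k).re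
      = ((∏ j ∈ univ.erase k, z j) * c).im := by
    intro c
    simpa [Pi.single_apply, apply_ite Complex.re, apply_ite Complex.im, ite_mul] using
      hpair (Pi.single k c)
  have h1 := hsingle 1
  have hI := hsingle Complex.I
  simp only [Complex.one_re, Complex.one_im, Complex.I_re, Complex.I_im, mul_one,
    Complex.mul_I_im] at h1 hI
  apply Complex.ext <;>
    simp only [imProdHamiltonianField, Complex.neg_re, Complex.neg_im, Complex.conj_re,
      Complex.conj_im] <;> linarith

theorem hasDerivAt_prod_of_hasDerivAt_field {φ : ℝ → ι → ℂ} {t : ℝ}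
    (h : HasDerivAt φ (imProdHamiltonianField (φ t)) t) :
    HasDerivAt (fun s => ∏ k, φ s k)
      ((-(∑ k, ∏ i ∈ univ.erase k, Complex.normSq (φ t i)) : ℝ) : ℂ) t := by
  have hprod := HasDerivAt.finsetProd (u := univ) fun k _ => hasDerivAt_pi.mp h k
  rw [Finset.prod_fn] at hprod
  refine hprod.congr_deriv ?_
  push_cast
  rw [← sum_neg_distrib]
  refine sum_congr rfl fun k _ => ?_
  rw [smul_eq_mul, imProdHamiltonianField, mul_neg, Complex.mul_conj, map_prod]
  push_cast
  rfl

theorem hasDerivAt_normSq_of_hasDerivAt_field {φ : ℝ → ι → ℂ} {t : ℝ}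
    (h : HasDerivAt φ (imProdHamiltonianField (φ t)) t) (j : ι) :
    HasDerivAt (fun s => Complex.normSq (φ s j)) (-2 * (∏ k, φ t k).re) t := by
  have hj := hasDerivAt_pi.mp h j
  have hsq := (hj.complex_re.mul hj.complex_re).add (hj.complex_im.mul hj.complex_im)
  refine (hsq.congr_deriv ?_).congr_of_eventuallyEq
    (Eventually.of_forall fun s => Complex.normSq_apply (φ s j))
  rw [← mul_prod_erase univ (φ t) (mem_univ j), Complex.mul_re]
  simp only [imProdHamiltonianField, Complex.neg_re, Complex.neg_im, Complex.conj_re,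
    Complex.conj_im]
  ring

end HamiltonianFlow

section ReducedFlow

variable {ι : Type*} [Fintype ι] [DecidableEq ι] {φ : ℝ → ι → ℂ} {α : ℝ}

theorem normSq_eq_of_hasDerivAt_field
    (hφ : ∀ t ∈ uIcc 0 α, HasDerivAt φ (imProdHamiltonianField (φ t)) t)
    {a : ι → ℝ} {i₀ : ι} (hinit : ∀ k, Complex.normSq (φ 0 k) = Complex.normSq (φ 0 i₀) - a k) :
    ∀ t ∈ uIcc 0 α, ∀ k, Complex.normSq (φ t k) = Complex.normSq (φ t i₀) - a k := by
  intro t ht k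
  have hconst := eqOn_uIcc_of_hasDerivAt_zero
    (f := fun s => Complex.normSq (φ s k) - Complex.normSq (φ s i₀))
    (fun s hs => ((hasDerivAt_normSq_of_hasDerivAt_field (hφ s hs) k).sub
      (hasDerivAt_normSq_of_hasDerivAt_field (hφ s hs) i₀)).congr_deriv (sub_self _)) t ht
  linarith [hinit k]

theorem im_prod_eq_of_hasDerivAt_field
    (hφ : ∀ t ∈ uIcc 0 α, HasDerivAt φ (imProdHamiltonianField (φ t)) t) :
    ∀ t ∈ uIcc 0 α, (∏ k, φ t k).im = (∏ k, φ 0 k).im :=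
  eqOn_uIcc_of_hasDerivAt_zero fun t ht =>
    (hasDerivAt_prod_of_hasDerivAt_field (hφ t ht)).complex_im.congr_deriv (Complex.ofReal_im _)

theorem isReducedFlow_of_hasDerivAt_field
    (hφ : ∀ t ∈ uIcc 0 α, HasDerivAt φ (imProdHamiltonianField (φ t)) t)
    {a : ι → ℝ} {i₀ : ι} (hinit : ∀ k, Complex.normSq (φ 0 k) = Complex.normSq (φ 0 i₀) - a k)
    {q : ℝ → ℝ} (hq : ∀ y, q y = ∏ k, (y - a k) - (∏ k, φ 0 k).im ^ 2) :
    IsReducedFlow q (fun t => Complex.normSq (φ t i₀)) (fun t => (∏ k, φ t k).re) α := by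
  have hnorm := normSq_eq_of_hasDerivAt_field hφ hinit
  have hderiv : ∀ t ∈ uIcc 0 α, deriv q (Complex.normSq (φ t i₀))
      = ∑ k, ∏ i ∈ univ.erase k, Complex.normSq (φ t i) := by
    intro t ht
    rw [funext hq, ((hasDerivAt_prod_sub a _).sub_const _).deriv]
    exact sum_congr rfl fun k _ => prod_congr rfl fun i _ => (hnorm t ht i).symm
  refine ⟨fun t ht => hasDerivAt_normSq_of_hasDerivAt_field (hφ t ht) i₀, fun t ht => ?_,
    fun t ht => ?_, fun t ht => ?_⟩
  · rw [hderiv t ht]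
    exact (hasDerivAt_prod_of_hasDerivAt_field (hφ t ht)).complex_re.congr_deriv
      (Complex.ofReal_re _)
  · rw [hderiv t ht]
    exact sum_nonneg fun k _ => prod_nonneg fun i _ => Complex.normSq_nonneg _
  · rw [hq, ← im_prod_eq_of_hasDerivAt_field hφ t ht,
      ← prod_congr rfl fun k _ => hnorm t ht k, ← map_prod, Complex.normSq_apply]
    ring

end ReducedFlow

section SectionPoint

variable {ι : Type*} [DecidableEq ι] {b : ι → ℝ} {i₀ : ι} {y : ℝ} {z : ι → ℂ}

theorem normSq_eq_of_sectionPoint {θ : ℝ} (h₀ : z i₀ = √y * Complex.exp (θ * Complex.I))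
    (hk : ∀ k, k ≠ i₀ → z k = √(y - b k)) (k : ι) (hy : Function.update b i₀ 0 k ≤ y) :
    Complex.normSq (z k) = y - Function.update b i₀ 0 k := by
  rcases eq_or_ne k i₀ with rfl | hki
  · simp only [Function.update_self, sub_zero] at hy ⊢
    rw [h₀, Complex.normSq_mul, Complex.normSq_ofReal, Complex.normSq_exp_ofReal_mul_I, mul_one,
      Real.mul_self_sqrt hy]
  · simp only [Function.update_of_ne hki] at hy ⊢
    rw [hk k hki, Complex.normSq_ofReal, Real.mul_self_sqrt (sub_nonneg.mpr hy)]

theorem prod_eq_of_sectionPoint [Fintype ι] {w : ℂ}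
    (h₀ : z i₀ = √y * Complex.exp (w.arg * Complex.I))
    (hk : ∀ k, k ≠ i₀ → z k = √(y - b k)) (hy : ∀ k, Function.update b i₀ 0 k ≤ y)
    (hw : ‖w‖ ^ 2 = ∏ k, (y - Function.update b i₀ 0 k)) :
    ∏ k, z k = w := by
  have hsqrt : ‖w‖ = √y * ∏ k ∈ univ.erase i₀, √(y - b k) := by
    rw [← Real.sqrt_sq (norm_nonneg w), hw, Real.sqrt_prod _ fun k _ => sub_nonneg.mpr (hy k),
      ← mul_prod_erase univ _ (mem_univ i₀), Function.update_self, sub_zero]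
    congr 1
    exact prod_congr rfl fun k hk => by rw [Function.update_of_ne (ne_of_mem_erase hk)]
  rw [← mul_prod_erase univ z (mem_univ i₀), h₀,
    prod_congr rfl fun k hk' => hk k (ne_of_mem_erase hk'), mul_right_comm,
    ← Complex.ofReal_prod, ← Complex.ofReal_mul, ← hsqrt,
    Complex.norm_mul_exp_arg_mul_I]

end SectionPoint

theorem prod_exp_mul_I_mul {ι : Type*} [Fintype ι] {θ : ι → ℝ} (hθ : ∑ k, θ k = 0) (z : ι → ℂ) :
    ∏ k, (Complex.exp (θ k * Complex.I) * z k) = ∏ k, z k := by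
  rw [prod_mul_distrib, ← Complex.exp_sum, ← sum_mul, ← Complex.ofReal_sum, hθ]
  simp

/-- For `b ∉ Δ` (expressed by `P_b'(ζ₀(b)) ≠ 0`), the time `α` at which the
Hamiltonian flow `φ` of `F₁(z) = Im(∏ zᵢ)` (with respect to the standard
symplectic form, `ω(v, X z) = dF₁(z) v`), starting at the section point
`Σ⁻(b)`, reaches the `T^{n−1}`-orbit of `Σ⁺(b)` satisfies
`α = −∫_{ζ₀(b)}^{ζ₁(b)} dx / √(P_b(x))`, where `ζ₀(b)` is the maximal real root
of `P_b(x) = x(x−b₂)⋯(x−bₙ) − b₁²` and `ζ₁(b)` the maximal real solution of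
`P_b(x) = 1`. -/
theorem statement10 (n : ℕ)
    (F₁ : (Fin (n + 1) → ℂ) → ℝ) (hF₁ : ∀ z, F₁ z = (∏ i, z i).im)
    (X : (Fin (n + 1) → ℂ) → (Fin (n + 1) → ℂ))
    (hX : ∀ z v, (∑ k, ((v k).re * (X z k).im - (v k).im * (X z k).re))
      = fderiv ℝ F₁ z v)
    (P : (Fin (n + 1) → ℝ) → ℝ → ℝ)
    (hP : ∀ b x, P b x =
      x * (∏ j ∈ Finset.univ.erase (0 : Fin (n + 1)), (x - b j)) - (b 0) ^ 2)
    (ζ₀ ζ₁ : (Fin (n + 1) → ℝ) → ℝ)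
    (hζ₀root : ∀ b, P b (ζ₀ b) = 0) (hζ₀max : ∀ b x, P b x = 0 → x ≤ ζ₀ b)
    (hζ₁root : ∀ b, P b (ζ₁ b) = 1) (hζ₁max : ∀ b x, P b x = 1 → x ≤ ζ₁ b)
    (b : Fin (n + 1) → ℝ)
    (hreg : deriv (fun x => P b x) (ζ₀ b) ≠ 0)
    (zm zp : Fin (n + 1) → ℂ)
    (hzm0 : zm 0 = (Real.sqrt (ζ₁ b) : ℂ) *
      Complex.exp ((Complex.arg (-1 + (b 0 : ℂ) * Complex.I) : ℂ) * Complex.I))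
    (hzmk : ∀ k : Fin (n + 1), k ≠ 0 → zm k = (Real.sqrt (ζ₁ b - b k) : ℂ))
    (hzp0 : zp 0 = (Real.sqrt (ζ₁ b) : ℂ) *
      Complex.exp ((Complex.arg (1 + (b 0 : ℂ) * Complex.I) : ℂ) * Complex.I))
    (hzpk : ∀ k : Fin (n + 1), k ≠ 0 → zp k = (Real.sqrt (ζ₁ b - b k) : ℂ))
    (α : ℝ) (φ : ℝ → (Fin (n + 1) → ℂ))
    (hφ0 : φ 0 = zm)
    (hφ : ∀ t ∈ Set.uIcc (0 : ℝ) α, HasDerivAt φ (X (φ t)) t)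
    (horb : ∃ θ : Fin (n + 1) → ℝ, (∑ k, θ k) = 0 ∧
      ∀ k, φ α k = Complex.exp ((θ k : ℂ) * Complex.I) * zp k) :
    α = - ∫ x in (ζ₀ b)..(ζ₁ b), 1 / Real.sqrt (P b x) := by
  obtain ⟨θ, hθsum, hθ⟩ := horb
  rw [eq_imProdHamiltonianField hF₁ hX] at hφ
  set a := Function.update b 0 0
  have hPa : ∀ x, P b x = ∏ k, (x - a k) - b 0 ^ 2 := fun x => by
    rw [hP, prod_sub_update_eq_mul_prod_erase]
  obtain ⟨h01, ha⟩ := lt_and_forall_le_of_prod_sub (sq_nonneg _) hPa (hζ₀root b) (hζ₁root b)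
    (hζ₁max b)
  have hw : ∀ s : ℝ, s ^ 2 = 1 → ‖(s : ℂ) + b 0 * Complex.I‖ ^ 2 = ∏ k, (ζ₁ b - a k) := by
    intro s hs
    rw [Complex.sq_norm, Complex.normSq_add_mul_I, hs]
    linarith [hPa (ζ₁ b), hζ₁root b]
  have hzm : ∏ k, zm k = -1 + b 0 * Complex.I := prod_eq_of_sectionPoint hzm0 hzmk ha
    (by simpa using hw (-1) (by norm_num))
  have hzp : ∏ k, zp k = 1 + b 0 * Complex.I := prod_eq_of_sectionPoint hzp0 hzpk ha
    (by simpa using hw 1 (by norm_num))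
  have hinit : ∀ k, Complex.normSq (φ 0 k) = Complex.normSq (φ 0 0) - a k := fun k => by
    rw [hφ0, normSq_eq_of_sectionPoint hzm0 hzmk k (ha k),
      normSq_eq_of_sectionPoint hzm0 hzmk 0 (ha 0)]
    simp [a]
  have hflow := isReducedFlow_of_hasDerivAt_field hφ hinit (q := P b)
    (fun y => by rw [hφ0, hzm, hPa]; simp)
  refine hflow.eq_neg_integral (hζ₀root b) (hζ₀max b) hreg h01 ?_ ?_ ?_ ?_
  · simp [hφ0, normSq_eq_of_sectionPoint hzm0 hzmk 0 (ha 0)]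
  · simp [hθ 0, Complex.normSq_exp_ofReal_mul_I, normSq_eq_of_sectionPoint hzp0 hzpk 0 (ha 0)]
  · simp [hφ0, hzm]
  · simp [hθ, prod_exp_mul_I_mul hθsum, hzp]
end

section
/- Let π(z) = (∏_{i=1}^n zᵢ, |z₁|²−|z₂|², …, |z₁|²−|zₙ|²) : ℂ^n → ℂ × ℝ^{n−1} with ∏zᵢ = u + i b₁, and let V_{F₁} be the Hamiltonian vector field of F₁(z) = Im(∏zᵢ) with respect to the standard symplectic form. Then π_*(V_{F₁}) = −χ ∂_u where χ(z) = Σ_{j=1}^n ∏_{i≠j} |zᵢ|²; moreover, in terms of x = |z₁|² and the polynomial P_b, χ = P_b'(x). -/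
/-! The Hamiltonian field of `Im f` for `f = ∏ zᵢ` is `Xₖ = -conj (∂ₖ f)`, with `∂ₖ f = ∏_{i≠k} zᵢ`.
Hence `df(X) = -∑ₖ |∂ₖ f|² = -χ` is real, and `d|zₖ|²(X) = 2 Re(conj zₖ Xₖ) = -2 Re f` does not
depend on `k`. The factor `x` of `P_b` is `x - b'` with `b' = |z₁|² - |z₁|² = 0`, so
`P_b(x) = ∏ⱼ (x - bⱼ) - b₁²` over all `j`; at `x = |z₁|²` each factor `x - bⱼ` is `|zⱼ|²`, and
the product rule gives `P_b'(x) = χ`. -/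

open Complex ComplexConjugate ContinuousLinearMap Finset

section ComplexParts

variable {E : Type*} [NormedAddCommGroup E] [NormedSpace ℝ E] {f : E → ℂ} {x : E}

theorem fderiv_re_apply (hf : DifferentiableAt ℝ f x) (v : E) :
    fderiv ℝ (fun y => (f y).re) x v = (fderiv ℝ f x v).re :=
  congrArg (· v) (reCLM.hasFDerivAt.comp x hf.hasFDerivAt).fderiv

theorem fderiv_im_apply (hf : DifferentiableAt ℝ f x) (v : E) :
    fderiv ℝ (fun y => (f y).im) x v = (fderiv ℝ f x v).im :=
  congrArg (· v) (imCLM.hasFDerivAt.comp x hf.hasFDerivAt).fderiv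

end ComplexParts

section Coordinates

variable {ι : Type*} [Fintype ι] [DecidableEq ι]

theorem fderiv_prod_apply (z v : ι → ℂ) :
    fderiv ℝ (fun z' : ι → ℂ => ∏ i, z' i) z v = ∑ k, (∏ j ∈ univ.erase k, z j) * v k := by
  rw [hasFDerivAt_finsetProd.fderiv]
  simp

omit [DecidableEq ι] in
theorem fderiv_normSq_sub_normSq_apply (z v : ι → ℂ) (j k : ι) :
    fderiv ℝ (fun z' : ι → ℂ => normSq (z' j) - normSq (z' k)) z v
      = 2 * (v j * conj (z j)).re - 2 * (v k * conj (z k)).re := by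
  have hnormSq (i : ι) : HasFDerivAt (fun z' : ι → ℂ => normSq (z' i))
      (2 • (innerSL ℝ (z i)).comp (proj i)) z := by
    simpa only [← normSq_eq_norm_sq] using (hasFDerivAt_apply i z).norm_sq
  rw [((hnormSq j).fun_sub (hnormSq k)).fderiv]
  simp only [sub_apply, smul_apply, coe_comp, Function.comp_apply, proj_apply,
    innerSL_apply_apply, Complex.inner, nsmul_eq_mul, Nat.cast_ofNat]

theorem eq_neg_conj_of_forall_symplectic_eq_im {w Y : ι → ℂ}
    (h : ∀ v : ι → ℂ, ∑ k, ((v k).re * (Y k).im - (v k).im * (Y k).re) = (∑ k, w k * v k).im) :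
    Y = fun k => -conj (w k) := by
  funext k
  have h₁ := h (Pi.single k 1)
  have hI := h (Pi.single k I)
  simp only [Pi.single_apply, apply_ite Complex.re, one_re, zero_re, ite_mul, one_mul, zero_mul,
    apply_ite Complex.im, one_im, zero_im, ite_self, sub_zero, sum_ite_eq', mem_univ, ↓reduceIte,
    mul_ite, mul_one, mul_zero, I_re, I_im, zero_sub, sum_neg_distrib, mul_im, add_zero] at h₁ hI
  refine Complex.ext ?_ ?_
  · rw [neg_re, conj_re]
    linarith
  · rw [neg_im, conj_im, neg_neg]
    linarith

end Coordinates

section Polynomial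

variable {ι 𝕜 : Type*} [DecidableEq ι] [NontriviallyNormedField 𝕜]

theorem hasDerivAt_prod_sub_s19 (s : Finset ι) (b : ι → 𝕜) (t : 𝕜) :
    HasDerivAt (fun x => ∏ j ∈ s, (x - b j)) (∑ j ∈ s, ∏ i ∈ s.erase j, (t - b i)) t := by
  simpa using HasDerivAt.fun_finsetProd (u := s) (fun j _ => (hasDerivAt_id t).sub_const (b j))

theorem deriv_mul_prod_erase_sub_sub [Fintype ι] {i₀ : ι} {b : ι → 𝕜} (hb : b i₀ = 0) (c t : 𝕜) :
    deriv (fun x => x * ∏ j ∈ univ.erase i₀, (x - b j) - c) t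
      = ∑ j, ∏ i ∈ univ.erase j, (t - b i) := by
  have hfun : (fun x => x * ∏ j ∈ univ.erase i₀, (x - b j)) = fun x => ∏ j, (x - b j) := by
    funext x
    rw [← mul_prod_erase univ (fun j => x - b j) (mem_univ i₀), hb, sub_zero]
  rw [deriv_sub_const, hfun, (hasDerivAt_prod_sub_s19 univ b t).deriv]

end Polynomial

/-- Let `π(z) = (∏ zᵢ, |z₁|²−|z₂|², …, |z₁|²−|zₙ|²)` with `∏ zᵢ = u + i b₁`, and
let `X = V_{F₁}` be the Hamiltonian vector field of `F₁(z) = Im(∏ zᵢ)` with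
respect to the standard symplectic form (`ω(v, X z) = dF₁(z) v`). Then
`π_*(V_{F₁}) = −χ ∂_u` where `χ(z) = ∑ⱼ ∏_{i≠j} |zᵢ|²`: the derivative of the
`u`-component along `X` is `−χ` and the derivatives of all other components of
`π` along `X` vanish; moreover `χ = P_b'(x)` at `x = |z₁|²`, where
`P_b(x) = x ∏_{j≥2}(x − bⱼ) − b₁²`. -/
theorem statement19 (n : ℕ)
    (F₁ : (Fin (n + 1) → ℂ) → ℝ) (hF₁ : ∀ z, F₁ z = (∏ i, z i).im)
    (X : (Fin (n + 1) → ℂ) → (Fin (n + 1) → ℂ))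
    (hX : ∀ z v, (∑ k, ((v k).re * (X z k).im - (v k).im * (X z k).re))
      = fderiv ℝ F₁ z v)
    (χ : (Fin (n + 1) → ℂ) → ℝ)
    (hχ : ∀ z, χ z = ∑ j : Fin (n + 1),
      ∏ i ∈ Finset.univ.erase j, Complex.normSq (z i))
    (z : Fin (n + 1) → ℂ) :
    fderiv ℝ (fun z' => (∏ i, z' i).re) z (X z) = - χ z ∧
    fderiv ℝ (fun z' => (∏ i, z' i).im) z (X z) = 0 ∧
    (∀ k : Fin (n + 1), k ≠ 0 →
      fderiv ℝ (fun z' => Complex.normSq (z' 0) - Complex.normSq (z' k)) z (X z) = 0) ∧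
    χ z = deriv (fun x => x * (∏ j ∈ Finset.univ.erase (0 : Fin (n + 1)),
        (x - (Complex.normSq (z 0) - Complex.normSq (z j))))
        - ((∏ i, z i).im) ^ 2) (Complex.normSq (z 0)) := by
  have hdiff : DifferentiableAt ℝ (fun z' : Fin (n + 1) → ℂ => ∏ i, z' i) z :=
    hasFDerivAt_finsetProd.differentiableAt
  have hXz : X z = fun k => -conj (∏ j ∈ univ.erase k, z j) := by
    refine eq_neg_conj_of_forall_symplectic_eq_im fun v => ?_
    rw [hX, show F₁ = fun z' => (∏ i, z' i).im from funext hF₁, fderiv_im_apply hdiff,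
      fderiv_prod_apply]
  have hprod : fderiv ℝ (fun z' => ∏ i, z' i) z (X z) = -(χ z : ℂ) := by
    rw [fderiv_prod_apply, hXz, hχ]
    simp only [mul_neg, sum_neg_distrib, mul_conj]
    simp only [map_prod, ofReal_sum]
  have hcoord (k : Fin (n + 1)) : X z k * conj (z k) = -conj (∏ i, z i) := by
    rw [hXz, ← prod_erase_mul univ z (mem_univ k), map_mul, neg_mul]
  refine ⟨?_, ?_, fun k _ => ?_, ?_⟩
  · rw [fderiv_re_apply hdiff, hprod, neg_re, ofReal_re]
  · rw [fderiv_im_apply hdiff, hprod, neg_im, ofReal_im, neg_zero]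
  · rw [fderiv_normSq_sub_normSq_apply, hcoord, hcoord, sub_self]
  · rw [deriv_mul_prod_erase_sub_sub (sub_self _), hχ]
    simp only [sub_sub_cancel]
end
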